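/- arXiv:2310.06221 — 6 statements merged into one kernel-verified Lean document; each statement's English description precedes it below -/
import Mathlib

section
/- Let X ~ ESN(μ, σ², ε) with μ > 0 and let z = max(X, 0). Then E[z] = μ - (1+ε)Φ(-μ/((1+ε)σ))·μ + (1+ε)²φ(-μ/((1+ε)σ))·σ - (4ε/√(2π))·σ. -/
open MeasureTheory

/-- standard normal pdf φ -/
noncomputable def stdnpdf (x : ℝ) : ℝ := Real.exp (-(x ^ 2) / 2) / Real.sqrt (2 * Real.pi)

/-- standard normal cdf Φ -/
noncomputable def stdncdf (x : ℝ) : ℝ := ∫ t in Set.Iic x, stdnpdf t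

/-- density of the epsilon-skew-normal distribution ESN(μ, σ², ε). -/
noncomputable def esnPdf (μ σ ε x : ℝ) : ℝ :=
  if x < μ then stdnpdf ((x - μ) / (σ * (1 + ε))) / σ
  else stdnpdf ((x - μ) / (σ * (1 - ε))) / σ

/-!
Only `X > 0` contributes to `E[max X 0]`. Split the half-line at the mode `μ`: on each side the
integrand is `x φ((x - μ)/c) / σ`, with `c = σ(1 + ε)` on `(0, μ)` and `c = σ(1 - ε)` on `(μ, ∞)`,
and since `φ' t = -t φ t` it has the explicit primitive `c (μ Φ((x - μ)/c) - c φ((x - μ)/c)) / σ`.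
Evaluating at `0`, `μ` and `∞` (with `Φ 0 = 1/2`, `φ 0 = 1/√(2π)`) gives the formula; the
`φ 0` terms from the two sides leave `(σ²(1 - ε)² - σ²(1 + ε)²) φ 0 / σ = -4εσ/√(2π)`.
-/

open Filter Set Real

section StandardNormal

lemma stdnpdf_nonneg (x : ℝ) : 0 ≤ stdnpdf x := by
  unfold stdnpdf; positivity

lemma stdnpdf_zero : stdnpdf 0 = 1 / √(2 * π) := by
  simp [stdnpdf]

lemma stdnpdf_neg (x : ℝ) : stdnpdf (-x) = stdnpdf x := by
  simp [stdnpdf]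

@[fun_prop]
lemma continuous_stdnpdf : Continuous stdnpdf := by
  unfold stdnpdf; fun_prop

lemma stdnpdf_eq_exp_neg_mul_sq (x : ℝ) :
    stdnpdf x = exp (-(1 / 2) * x ^ 2) / √(2 * π) := by
  rw [stdnpdf]; ring_nf

lemma integrable_stdnpdf : Integrable stdnpdf := by
  simp_rw [funext stdnpdf_eq_exp_neg_mul_sq]
  exact (integrable_exp_neg_mul_sq (by norm_num)).div_const _

lemma integral_stdnpdf : ∫ x, stdnpdf x = 1 := by
  simp_rw [stdnpdf_eq_exp_neg_mul_sq]
  rw [integral_div, integral_gaussian, show π / (1 / 2) = 2 * π by ring, div_self (by positivity)]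

lemma stdncdf_zero : stdncdf 0 = 1 / 2 := by
  have h_symm : ∫ x in Ioi 0, stdnpdf x = ∫ x in Iic 0, stdnpdf x := by
    simpa [stdnpdf_neg] using (integral_comp_neg_Iic (0 : ℝ) stdnpdf).symm
  have h_total := intervalIntegral.integral_Iic_add_Ioi (b := 0)
    integrable_stdnpdf.integrableOn integrable_stdnpdf.integrableOn
  rw [integral_stdnpdf, h_symm] at h_total
  rw [stdncdf]
  linarith

lemma hasDerivAt_stdnpdf (x : ℝ) : HasDerivAt stdnpdf (-x * stdnpdf x) x := by
  have h_exponent : HasDerivAt (fun t : ℝ => -(t ^ 2) / 2) (-x) x :=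
    ((hasDerivAt_pow 2 x).neg.div_const 2).congr_deriv (by norm_num; ring)
  exact (h_exponent.exp.div_const √(2 * π)).congr_deriv (by unfold stdnpdf; ring)

lemma hasDerivAt_stdncdf (x : ℝ) : HasDerivAt stdncdf (stdnpdf x) x := by
  have h_eq : stdncdf = fun y => stdncdf 0 + ∫ t in (0 : ℝ)..y, stdnpdf t := by
    funext y
    rw [← intervalIntegral.integral_Iic_sub_Iic integrable_stdnpdf.integrableOn
      integrable_stdnpdf.integrableOn, stdncdf, stdncdf, add_sub_cancel]
  rw [h_eq]
  exact (continuous_stdnpdf.integral_hasStrictDerivAt 0 x).hasDerivAt.const_add _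

lemma tendsto_stdncdf_atTop : Tendsto stdncdf atTop (nhds 1) := by
  rw [← integral_stdnpdf]
  exact (aecover_Iic tendsto_id).integral_tendsto_of_countably_generated integrable_stdnpdf

lemma tendsto_stdnpdf_atTop : Tendsto stdnpdf atTop (nhds 0) := by
  have h : Tendsto (fun x : ℝ => x ^ 2 / 2) atTop atTop :=
    (tendsto_pow_atTop two_ne_zero).atTop_div_const two_pos
  have h_exp := (tendsto_exp_neg_atTop_nhds_zero.comp h).div_const √(2 * π)
  rw [zero_div] at h_exp
  exact h_exp.congr fun x => by simp [stdnpdf, neg_div]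

end StandardNormal

section FirstMoment

noncomputable def normalFirstMomentPrimitive (μ c x : ℝ) : ℝ :=
  c * (μ * stdncdf ((x - μ) / c) - c * stdnpdf ((x - μ) / c))

variable {μ c : ℝ}

lemma hasDerivAt_normalFirstMomentPrimitive (hc : c ≠ 0) (x : ℝ) :
    HasDerivAt (normalFirstMomentPrimitive μ c) (x * stdnpdf ((x - μ) / c)) x := by
  have h_inner : HasDerivAt (fun y => (y - μ) / c) (1 / c) x :=
    ((hasDerivAt_id x).sub_const μ).div_const c
  have h := (((hasDerivAt_stdncdf _).comp x h_inner).const_mul μ).sub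
    (((hasDerivAt_stdnpdf _).comp x h_inner).const_mul c) |>.const_mul c
  exact h.congr_deriv (by field_simp; ring)

lemma normalFirstMomentPrimitive_self :
    normalFirstMomentPrimitive μ c μ = c * (μ / 2 - c / √(2 * π)) := by
  simp [normalFirstMomentPrimitive, stdncdf_zero, stdnpdf_zero, div_eq_mul_inv]

lemma tendsto_normalFirstMomentPrimitive_atTop (hc : 0 < c) :
    Tendsto (normalFirstMomentPrimitive μ c) atTop (nhds (c * μ)) := by
  have h_lin : Tendsto (fun x => (x - μ) / c) atTop atTop :=
    (tendsto_atTop_add_const_right _ (-μ) tendsto_id).atTop_div_const hc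
  have h := (((tendsto_stdncdf_atTop.comp h_lin).const_mul μ).sub
    ((tendsto_stdnpdf_atTop.comp h_lin).const_mul c)).const_mul c
  simp only [mul_one, mul_zero, sub_zero, Function.comp_def] at h
  exact h

lemma integral_mul_stdnpdf_interval (hc : c ≠ 0) (a b : ℝ) :
    ∫ x in a..b, x * stdnpdf ((x - μ) / c)
      = normalFirstMomentPrimitive μ c b - normalFirstMomentPrimitive μ c a :=
  intervalIntegral.integral_eq_sub_of_hasDerivAt
    (fun x _ => hasDerivAt_normalFirstMomentPrimitive hc x)
    (Continuous.intervalIntegrable (by fun_prop) a b)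

lemma integrableOn_Ioi_mul_stdnpdf (hc : 0 < c) {a : ℝ} (ha : 0 ≤ a) :
    IntegrableOn (fun x => x * stdnpdf ((x - μ) / c)) (Ioi a) :=
  integrableOn_Ioi_deriv_of_nonneg
    (hasDerivAt_normalFirstMomentPrimitive hc.ne' a).continuousAt.continuousWithinAt
    (fun x _ => hasDerivAt_normalFirstMomentPrimitive hc.ne' x)
    (fun x (hx : a < x) => mul_nonneg (ha.trans hx.le) (stdnpdf_nonneg _))
    (tendsto_normalFirstMomentPrimitive_atTop hc)

lemma integral_Ioi_mul_stdnpdf (hc : 0 < c) {a : ℝ} (ha : 0 ≤ a) :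
    ∫ x in Ioi a, x * stdnpdf ((x - μ) / c) = c * μ - normalFirstMomentPrimitive μ c a :=
  integral_Ioi_of_hasDerivAt_of_nonneg
    (hasDerivAt_normalFirstMomentPrimitive hc.ne' a).continuousAt.continuousWithinAt
    (fun x _ => hasDerivAt_normalFirstMomentPrimitive hc.ne' x)
    (fun x (hx : a < x) => mul_nonneg (ha.trans hx.le) (stdnpdf_nonneg _))
    (tendsto_normalFirstMomentPrimitive_atTop hc)

end FirstMoment

lemma integral_max_mul_esnPdf {μ σ ε : ℝ} (hμ : 0 < μ) (hσ : 0 < σ) (hε : ε < 1) :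
    ∫ x, max x 0 * esnPdf μ σ ε x
      = ((∫ x in 0..μ, x * stdnpdf ((x - μ) / (σ * (1 + ε))))
          + ∫ x in Ioi μ, x * stdnpdf ((x - μ) / (σ * (1 - ε)))) / σ := by
  set f := fun x => max x 0 * esnPdf μ σ ε x
  have h_left : EqOn f (fun x => x * stdnpdf ((x - μ) / (σ * (1 + ε))) / σ) (uIoo 0 μ) := by
    intro x hx
    rw [uIoo_of_le hμ.le] at hx
    simp only [f, esnPdf, if_pos hx.2, max_eq_left hx.1.le, mul_div_assoc]
  have h_right : EqOn f (fun x => x * stdnpdf ((x - μ) / (σ * (1 - ε))) / σ) (Ioi μ) := by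
    intro x hx
    simp only [f, esnPdf, if_neg (not_lt.2 (le_of_lt (mem_Ioi.1 hx))),
      max_eq_left (hμ.trans hx).le, mul_div_assoc]
  have h_int_left : IntervalIntegrable f volume 0 μ :=
    ((by fun_prop : Continuous fun x => x * stdnpdf ((x - μ) / (σ * (1 + ε))) / σ)
      |>.intervalIntegrable 0 μ).congr_uIoo (fun x hx => (h_left hx).symm)
  have h_int_right : IntegrableOn f (Ioi μ) :=
    IntegrableOn.congr_fun
      ((integrableOn_Ioi_mul_stdnpdf (mul_pos hσ (sub_pos.2 hε)) hμ.le).div_const σ)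
      (fun x hx => (h_right hx).symm) measurableSet_Ioi
  have h_supp : ∫ x, f x = ∫ x in Ioi 0, f x :=
    (setIntegral_eq_integral_of_forall_compl_eq_zero fun x (hx : ¬ 0 < x) => by
      simp [f, max_eq_right (not_lt.1 hx)]).symm
  rw [h_supp, ← intervalIntegral.integral_interval_add_Ioi' h_int_left h_int_right,
    intervalIntegral.integral_congr_uIoo h_left, setIntegral_congr_fun measurableSet_Ioi h_right,
    intervalIntegral.integral_div, integral_div, add_div]

/-- For X ~ ESN(μ, σ², ε) with μ > 0 and z = max(X, 0),
    E[z] = μ - (1+ε)Φ(-μ/((1+ε)σ))·μ + (1+ε)²φ(-μ/((1+ε)σ))·σ - (4ε/√(2π))·σ. -/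
theorem esn_rectified_mean (μ σ ε : ℝ) (hμ : 0 < μ) (hσ : 0 < σ)
    (hε₁ : -1 < ε) (hε₂ : ε < 1) :
    (∫ x : ℝ, max x 0 * esnPdf μ σ ε x)
      = μ - (1 + ε) * stdncdf (-μ / ((1 + ε) * σ)) * μ
        + (1 + ε) ^ 2 * stdnpdf (-μ / ((1 + ε) * σ)) * σ
        - (4 * ε / Real.sqrt (2 * Real.pi)) * σ := by
  have ha : 0 < σ * (1 + ε) := mul_pos hσ (by linarith)
  have hb : 0 < σ * (1 - ε) := mul_pos hσ (by linarith)
  rw [integral_max_mul_esnPdf hμ hσ hε₂, integral_mul_stdnpdf_interval ha.ne',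
    integral_Ioi_mul_stdnpdf hb hμ.le, normalFirstMomentPrimitive_self,
    normalFirstMomentPrimitive_self, normalFirstMomentPrimitive,
    show (0 - μ) / (σ * (1 + ε)) = -μ / ((1 + ε) * σ) by ring]
  field_simp
  ring
end

section
/- Consider the Huber contamination model P = ε·P_out + (1-ε)·P_in on a feature space of intrinsic dimension m-1, where empirical kNN density estimation gives p̂_in(z; k, n) = k/(c_b · n · r_k(z)^{m-1}), with r_k(z) the distance from z to its k-th nearest neighbor among n in-distribution samples. Suppose p̂_out(z) = ĉ_0 · 1{p̂_in(z; k, n) < βεĉ_0/((1-β)(1-ε))} and set λ = -((1-β)(1-ε)k / (βεc_b n ĉ_0))^{1/(m-1)}. Then for every test point z, the kNN decision 1{-r_k(z) ≥ λ} equals the estimated Bayes decision 1{p̂(g = 1 | z) ≥ β}, where p̂(g = 1 | z) = (1-ε)p̂_in(z) / ((1-ε)p̂_in(z) + ε·p̂_out(z)). -/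
/-!
Both decisions are monotone threshold rules in `r_k(z)`. The plug-in posterior exceeds `β`
exactly when `p̂_in(z)` reaches the threshold `T = βεĉ₀/((1-β)(1-ε))` built into `p̂_out`
(below it, `p̂_out = ĉ₀` and the posterior inequality rearranges to `T ≤ p̂_in`; above it,
`p̂_out = 0` and the posterior is `1`). Since `p̂_in` is `k/(c_b n r_k^{m-1})`, the condition
`T ≤ p̂_in(z)` says `r_k(z)^{m-1} ≤ k/(c_b n T) = (-λ)^{m-1}`.
-/

theorem le_div_mul_iff_le_div_mul {T c x k : ℝ} (hT : 0 < T) (hc : 0 < c) (hx : 0 < x) :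
    T ≤ k / (c * x) ↔ x ≤ k / (c * T) := by
  rw [le_div_iff₀ (by positivity), le_div_iff₀ (by positivity)]
  constructor <;> intro h <;> linarith

theorem le_rpow_one_div_iff {r A : ℝ} {d : ℕ} (hr : 0 ≤ r) (hA : 0 ≤ A) (hd : d ≠ 0) :
    r ≤ A ^ (1 / (d : ℝ)) ↔ r ^ d ≤ A := by
  rw [one_div, Real.le_rpow_inv_iff_of_pos hr hA (by positivity), Real.rpow_natCast]

theorem le_plugin_posterior_iff {ε β c₀ p : ℝ} (hε : 0 < ε) (hε1 : ε < 1) (hβ : 0 < β)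
    (hβ1 : β < 1) (hc₀ : 0 < c₀) (hp : 0 ≤ p) :
    β ≤ (1 - ε) * p / ((1 - ε) * p
        + ε * (c₀ * if p < β * ε * c₀ / ((1 - β) * (1 - ε)) then 1 else 0))
      ↔ β * ε * c₀ / ((1 - β) * (1 - ε)) ≤ p := by
  have hβ' : 0 < 1 - β := by linarith
  have hε' : 0 < 1 - ε := by linarith
  split_ifs with hbelow
  · rw [mul_one, le_div_iff₀ (by positivity), div_le_iff₀ (by positivity)]
    constructor <;> intro h <;> linarith
  · have hp_pos : 0 < p := lt_of_lt_of_le (by positivity) (not_lt.mp hbelow)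
    rw [mul_zero, mul_zero, add_zero, div_self (by positivity)]
    exact iff_of_true hβ1.le (not_lt.mp hbelow)

theorem knn_decision_eq_bayes_general {α : Type*}
    (ε β cb c0 : ℝ) (k n m : ℕ)
    (hε : 0 < ε) (hε1 : ε < 1) (hβ : 0 < β) (hβ1 : β < 1)
    (hcb : 0 < cb) (hc0 : 0 < c0) (hn : 0 < n) (hm : 2 ≤ m)
    (r : α → ℝ) (hr : ∀ z, 0 < r z)
    (pin : α → ℝ)
    (hpin : ∀ z, pin z = (k : ℝ) / (cb * (n : ℝ) * r z ^ (m - 1)))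
    (pout : α → ℝ)
    (hpout : ∀ z, pout z
      = c0 * (if pin z < β * ε * c0 / ((1 - β) * (1 - ε)) then 1 else 0))
    (phat : α → ℝ)
    (hphat : ∀ z, phat z = (1 - ε) * pin z / ((1 - ε) * pin z + ε * pout z))
    (lam : ℝ)
    (hlam : lam = -(((1 - β) * (1 - ε) * (k : ℝ) / (β * ε * cb * (n : ℝ) * c0))
      ^ ((1 : ℝ) / ((m : ℝ) - 1)))) :
    ∀ z : α, (lam ≤ -(r z) ↔ β ≤ phat z) := by
  intro z
  have hn' : (0 : ℝ) < n := by exact_mod_cast hn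
  have hdim : (m : ℝ) - 1 = ((m - 1 : ℕ) : ℝ) := by
    rw [Nat.cast_sub (by omega), Nat.cast_one]
  have hthreshold : (1 - β) * (1 - ε) * (k : ℝ) / (β * ε * cb * n * c0)
      = k / (cb * n * (β * ε * c0 / ((1 - β) * (1 - ε)))) := by
    field_simp
  have hpin_nonneg : 0 ≤ pin z := by
    rw [hpin]
    have := hr z
    positivity
  rw [hlam, neg_le_neg_iff, hdim, le_rpow_one_div_iff (hr z).le (by positivity) (by omega),
    hphat, hpout, le_plugin_posterior_iff hε hε1 hβ hβ1 hc0 hpin_nonneg, hpin,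
    le_div_mul_iff_le_div_mul (by positivity) (by positivity) (pow_pos (hr z) _), hthreshold]

/-- In the Huber contamination model P = ε·P_out + (1-ε)·P_in with the
    empirical kNN density estimate p̂_in(z) = k/(c_b·n·r_k(z)^{m-1}), the OOD model
    p̂_out(z) = ĉ_0·1{p̂_in(z) < βεĉ_0/((1-β)(1-ε))}, and
    λ = -((1-β)(1-ε)k/(βεc_b·n·ĉ_0))^{1/(m-1)}, the kNN decision 1{-r_k(z) ≥ λ}
    coincides with the estimated Bayes decision 1{p̂(g=1|z) ≥ β}, where
    p̂(g=1|z) = (1-ε)p̂_in(z)/((1-ε)p̂_in(z) + ε·p̂_out(z)). -/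
theorem knn_decision_eq_bayes {α : Type*}
    (ε β cb c0 : ℝ) (k n m : ℕ)
    (hε : 0 < ε) (hε1 : ε < 1) (hβ : 0 < β) (hβ1 : β < 1)
    (hcb : 0 < cb) (hc0 : 0 < c0) (hk : 0 < k) (hn : 0 < n) (hm : 2 ≤ m)
    (r : α → ℝ) (hr : ∀ z, 0 < r z)
    (pin : α → ℝ)
    (hpin : ∀ z, pin z = (k : ℝ) / (cb * (n : ℝ) * r z ^ (m - 1)))
    (pout : α → ℝ)
    (hpout : ∀ z, pout z
      = c0 * (if pin z < β * ε * c0 / ((1 - β) * (1 - ε)) then 1 else 0))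
    (phat : α → ℝ)
    (hphat : ∀ z, phat z = (1 - ε) * pin z / ((1 - ε) * pin z + ε * pout z))
    (lam : ℝ)
    (hlam : lam = -(((1 - β) * (1 - ε) * (k : ℝ) / (β * ε * cb * (n : ℝ) * c0))
      ^ ((1 : ℝ) / ((m : ℝ) - 1)))) :
    ∀ z : α, (lam ≤ -(r z) ↔ β ≤ phat z) :=
  knn_decision_eq_bayes_general ε β cb c0 k n m hε hε1 hβ hβ1 hcb hc0 hn hm r hr pin hpin pout hpout
    phat hphat lam hlam
end

section
/- For a one-hot target vector y ∈ {0,1}^{N_u} and a matrix U* with residual R(U*, y) = min_{μ ∈ R^k} ||y - U* μ||₂², suppose V* = [L*; U*] ∈ R^{N×k} consists of the top-k singular vectors of a symmetric matrix Ȧ and V♭ = [L♭; U♭] the remaining singular vectors (splitting rows into labeled part L and unlabeled part U). Then R(U*, y) ≤ ||(I - P_{L♭}) U♭ᵀ y||₂², where P_{L♭} = L♭ᵀ (L♭ L♭ᵀ)† L♭ is the orthogonal projection onto the row span of L♭ and † denotes the Moore-Penrose pseudoinverse. -/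
open Matrix

/-! With `X` the pseudoinverse, take the coefficient vector `μ₀ = (U*ᵀ - L*ᵀ X L♭ U♭ᵀ) y`.
Completeness of `[V* V♭]` (`U* U*ᵀ = I - U♭ U♭ᵀ` and `U* L*ᵀ = -U♭ L♭ᵀ`) turns its residual
into `y - U* μ₀ = U♭ w` with `w = (I - L♭ᵀ X L♭) U♭ᵀ y`. Orthonormality of the columns of
`[L♭; U♭]` gives `‖U♭ w‖² = ‖w‖² - ‖L♭ w‖² ≤ ‖w‖²`. -/

variable {R m n k r : Type*} [Fintype m] [Fintype k] [Fintype r]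

theorem dotProduct_mulVec_self_eq_transpose_mul [Fintype n] [CommRing R]
    (U : Matrix n r R) (w : r → R) :
    U *ᵥ w ⬝ᵥ U *ᵥ w = w ⬝ᵥ (Uᵀ * U) *ᵥ w := by
  rw [← mulVec_mulVec, dotProduct_transpose_mulVec]

theorem dotProduct_mulVec_self_le [Fintype n] [DecidableEq r] [CommRing R] [LinearOrder R]
    [IsStrictOrderedRing R] (L : Matrix m r R) (U : Matrix n r R) (h : Lᵀ * L + Uᵀ * U = 1)
    (w : r → R) : U *ᵥ w ⬝ᵥ U *ᵥ w ≤ w ⬝ᵥ w := by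
  have hsplit : U *ᵥ w ⬝ᵥ U *ᵥ w = w ⬝ᵥ w - L *ᵥ w ⬝ᵥ L *ᵥ w := by
    rw [dotProduct_mulVec_self_eq_transpose_mul, dotProduct_mulVec_self_eq_transpose_mul,
      eq_sub_of_add_eq' h, sub_mulVec, one_mulVec, dotProduct_sub]
  rw [hsplit]
  exact sub_le_self _ (Finset.sum_nonneg fun i _ => mul_self_nonneg _)

theorem one_sub_mul_eq_of_orthonormal_rows [DecidableEq n] [DecidableEq r] [CommRing R]
    (Lstar : Matrix m k R) (Ustar : Matrix n k R) (Lflat : Matrix m r R) (Uflat : Matrix n r R)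
    (hU : Ustar * Ustarᵀ + Uflat * Uflatᵀ = 1) (hLU : Lstar * Ustarᵀ + Lflat * Uflatᵀ = 0)
    (X : Matrix m m R) :
    1 - Ustar * (Ustarᵀ - Lstarᵀ * X * Lflat * Uflatᵀ)
      = Uflat * (1 - Lflatᵀ * X * Lflat) * Uflatᵀ := by
  have hUL : Ustar * Lstarᵀ = -(Uflat * Lflatᵀ) := by
    simpa [transpose_add, transpose_mul, add_eq_zero_iff_eq_neg] using congrArg transpose hLU
  calc 1 - Ustar * (Ustarᵀ - Lstarᵀ * X * Lflat * Uflatᵀ)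
      = 1 - Ustar * Ustarᵀ + Ustar * Lstarᵀ * (X * Lflat * Uflatᵀ) := by
        simp only [Matrix.mul_sub, Matrix.mul_assoc]; abel
    _ = Uflat * (1 - Lflatᵀ * X * Lflat) * Uflatᵀ := by
        rw [eq_sub_of_add_eq hU, hUL]
        simp only [Matrix.mul_sub, Matrix.sub_mul, Matrix.mul_one,
          Matrix.neg_mul, Matrix.mul_assoc]
        abel

theorem ncd_residual_bound_general
    (Nl Nu k r : ℕ)
    (Lstar : Matrix (Fin Nl) (Fin k) ℝ) (Ustar : Matrix (Fin Nu) (Fin k) ℝ)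
    (Lflat : Matrix (Fin Nl) (Fin r) ℝ) (Uflat : Matrix (Fin Nu) (Fin r) ℝ)
    -- columns of [V* V♭] are orthonormal (VᵀV = I blockwise)
    (h2 : Lflatᵀ * Lflat + Uflatᵀ * Uflat = 1)
    -- completeness: V*V*ᵀ + V♭V♭ᵀ = I (blockwise)
    (h5 : Ustar * Ustarᵀ + Uflat * Uflatᵀ = 1)
    (h6 : Lstar * Ustarᵀ + Lflat * Uflatᵀ = 0)
    (Pinv : Matrix (Fin Nl) (Fin Nl) ℝ)
    (y : Fin Nu → ℝ) :
    (⨅ μ : Fin k → ℝ, ∑ x, (y x - Ustar.mulVec μ x) ^ 2)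
      ≤ ∑ j, (((1 - Lflatᵀ * Pinv * Lflat).mulVec (Uflatᵀ.mulVec y)) j) ^ 2 := by
  set w := (1 - Lflatᵀ * Pinv * Lflat) *ᵥ (Uflatᵀ *ᵥ y)
  set μ₀ := (Ustarᵀ - Lstarᵀ * Pinv * Lflat * Uflatᵀ) *ᵥ y
  have hresidual : y - Ustar *ᵥ μ₀ = Uflat *ᵥ w := by
    rw [mulVec_mulVec, mulVec_mulVec, mulVec_mulVec,
      ← one_sub_mul_eq_of_orthonormal_rows Lstar Ustar Lflat Uflat h5 h6, sub_mulVec, one_mulVec]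
  have hbdd : BddBelow (Set.range fun μ => ∑ x, (y x - (Ustar *ᵥ μ) x) ^ 2) :=
    ⟨0, by rintro _ ⟨μ, rfl⟩; positivity⟩
  calc (⨅ μ, ∑ x, (y x - (Ustar *ᵥ μ) x) ^ 2)
      ≤ ∑ x, ((y - Ustar *ᵥ μ₀) x) ^ 2 := ciInf_le hbdd μ₀
    _ = Uflat *ᵥ w ⬝ᵥ Uflat *ᵥ w := by simp only [hresidual, dotProduct, sq]
    _ ≤ w ⬝ᵥ w := dotProduct_mulVec_self_le Lflat Uflat h2 w
    _ = ∑ j, w j ^ 2 := by simp only [dotProduct, sq]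

/-- Let V* = [L*; U*] be the top-k singular vectors and V♭ = [L♭; U♭]
    the remaining singular vectors of a symmetric matrix Ȧ (so that [V* V♭] is orthogonal,
    expressed blockwise below).  Let Pinv be the Moore–Penrose inverse of L♭L♭ᵀ
    (characterized by the four Penrose conditions) and P_{L♭} = L♭ᵀ·Pinv·L♭.
    Then for every labeling vector y,
    R(U*, y) = min_μ ‖y - U*μ‖₂² ≤ ‖(I - P_{L♭})·U♭ᵀ·y‖₂². -/
theorem ncd_residual_bound
    (Nl Nu k r : ℕ)
    (Lstar : Matrix (Fin Nl) (Fin k) ℝ) (Ustar : Matrix (Fin Nu) (Fin k) ℝ)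
    (Lflat : Matrix (Fin Nl) (Fin r) ℝ) (Uflat : Matrix (Fin Nu) (Fin r) ℝ)
    -- columns of [V* V♭] are orthonormal (VᵀV = I blockwise)
    (h1 : Lstarᵀ * Lstar + Ustarᵀ * Ustar = 1)
    (h2 : Lflatᵀ * Lflat + Uflatᵀ * Uflat = 1)
    (h3 : Lstarᵀ * Lflat + Ustarᵀ * Uflat = 0)
    -- completeness: V*V*ᵀ + V♭V♭ᵀ = I (blockwise)
    (h4 : Lstar * Lstarᵀ + Lflat * Lflatᵀ = 1)
    (h5 : Ustar * Ustarᵀ + Uflat * Uflatᵀ = 1)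
    (h6 : Lstar * Ustarᵀ + Lflat * Uflatᵀ = 0)
    -- Pinv is the Moore–Penrose pseudoinverse of L♭L♭ᵀ
    (Pinv : Matrix (Fin Nl) (Fin Nl) ℝ)
    (hp1 : (Lflat * Lflatᵀ) * Pinv * (Lflat * Lflatᵀ) = Lflat * Lflatᵀ)
    (hp2 : Pinv * (Lflat * Lflatᵀ) * Pinv = Pinv)
    (hp3 : ((Lflat * Lflatᵀ) * Pinv)ᵀ = (Lflat * Lflatᵀ) * Pinv)
    (hp4 : (Pinv * (Lflat * Lflatᵀ))ᵀ = Pinv * (Lflat * Lflatᵀ))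
    (y : Fin Nu → ℝ) :
    (⨅ μ : Fin k → ℝ, ∑ x, (y x - Ustar.mulVec μ x) ^ 2)
      ≤ ∑ j, (((1 - Lflatᵀ * Pinv * Lflat).mulVec (Uflatᵀ.mulVec y)) j) ^ 2 :=
  ncd_residual_bound_general Nl Nu k r Lstar Ustar Lflat Uflat h2 h5 h6 Pinv y
end

section
/- Under the setting of the NCD residual bound, if additionally there exists ω ∈ R^{N_l} such that for all i = k+1, ..., N, ⟨yᵀ(σ_i I - A_uu)† A_ul, l_i⟩ = ⟨ω, l_i⟩, where σ_i is the i-th largest singular value of Ȧ, l_i the labeled part of the i-th singular vector, and u_i = (σ_i I - A_uu)† A_ul l_i its unlabeled part, then R(U*, y) = 0; and conversely, R(U*, y) = 0 implies such an ω exists. -/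
/-! Since `u_i = P_i A_ul l_i`, the left side of the condition is `u_i ⬝ᵥ y`, and zero residual
means that `y` lies in the span of the top-`k` vectors `u_j`. Orthonormality of the rows
`[l_i; u_i]` gives `u_i ⬝ᵥ u_j = -(l_i ⬝ᵥ l_j)` for `i ≠ j`, so if `y = ∑ μ_j u_j` then
`u_i ⬝ᵥ y = l_i ⬝ᵥ ω` beyond the top `k`, with `ω = -∑ μ_j l_j`. Conversely, completeness gives
`y = ∑_i (u_i ⬝ᵥ y) u_i` and `∑_i (l_i ⬝ᵥ ω) u_i = 0`, so `y = ∑_i (u_i ⬝ᵥ y - l_i ⬝ᵥ ω) u_i`,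
in which only the top-`k` coefficients survive. -/

open Matrix

namespace Matrix

variable {ι κ m n : Type*}

theorem transpose_mulVec_eq_submatrix_mulVec_comp [Fintype ι] [Fintype κ] (U : Matrix ι n ℝ)
    {e : κ → ι} (he : e.Injective) {c : ι → ℝ} (hc : ∀ i ∉ Set.range e, c i = 0) :
    Uᵀ *ᵥ c = (U.submatrix e id)ᵀ *ᵥ (c ∘ e) := by
  funext x
  exact (Fintype.sum_of_injective e he _ _ (fun i hi => by simp [hc i hi]) fun j => rfl).symm

theorem iInf_sum_sq_sub_mulVec_eq_zero_iff [Fintype m] [Fintype n] (M : Matrix m n ℝ)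
    (y : m → ℝ) :
    (⨅ μ : n → ℝ, ∑ x, (y x - (M *ᵥ μ) x) ^ 2) = 0 ↔ ∃ μ, M *ᵥ μ = y := by
  have nonneg (μ : n → ℝ) : 0 ≤ ∑ x, (y x - (M *ᵥ μ) x) ^ 2 :=
    Finset.sum_nonneg fun x _ => sq_nonneg _
  constructor
  · intro h
    have hy : y ∈ closure (Set.range M.mulVecLin) := by
      refine Metric.mem_closure_iff.2 fun ε hε => ?_
      obtain ⟨μ, hμ⟩ := exists_lt_of_ciInf_lt (h.symm ▸ pow_pos hε 2 : _ < ε ^ 2)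
      refine ⟨M *ᵥ μ, ⟨μ, rfl⟩, (dist_pi_lt_iff hε).2 fun x => ?_⟩
      have hx : (y x - (M *ᵥ μ) x) ^ 2 < ε ^ 2 :=
        (Finset.single_le_sum (fun x _ => sq_nonneg (y x - (M *ᵥ μ) x))
          (Finset.mem_univ x)).trans_lt hμ
      rw [Real.dist_eq]
      exact abs_lt_of_sq_lt_sq hx hε.le
    rwa [← LinearMap.coe_range,
      (LinearMap.range M.mulVecLin).closed_of_finiteDimensional.closure_eq] at hy
  · rintro ⟨μ, rfl⟩
    refine le_antisymm ?_ (le_ciInf nonneg)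
    refine (ciInf_le ⟨0, Set.forall_mem_range.2 nonneg⟩ μ).trans_eq ?_
    simp

variable [Fintype m] [Fintype n] (L : Matrix ι m ℝ) (U : Matrix ι n ℝ)

theorem mulVec_transpose_submatrix_mulVec_apply_of_notMem_range [Fintype κ] [DecidableEq ι]
    (horth : L * Lᵀ + U * Uᵀ = 1) (e : κ → ι) (μ : κ → ℝ) {i : ι} (hi : i ∉ Set.range e) :
    (U *ᵥ ((U.submatrix e id)ᵀ *ᵥ μ)) i = (L *ᵥ -((L.submatrix e id)ᵀ *ᵥ μ)) i := by
  have hrow : (U * (U.submatrix e id)ᵀ) i = -(L * (L.submatrix e id)ᵀ) i := by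
    funext j
    have h := congrFun (congrFun horth i) (e j)
    rw [add_apply, one_apply_ne fun h => hi ⟨j, h.symm⟩] at h
    exact eq_neg_of_add_eq_zero_right h
  rw [mulVec_mulVec, mulVec_neg, mulVec_mulVec, Pi.neg_apply]
  exact (congrArg (· ⬝ᵥ μ) hrow).trans (neg_dotProduct _ _)

theorem transpose_mulVec_sub_mulVec [Fintype ι] [DecidableEq n] (hcuu : Uᵀ * U = 1)
    (hclu : Lᵀ * U = 0) (y : n → ℝ) (ω : m → ℝ) : Uᵀ *ᵥ (U *ᵥ y - L *ᵥ ω) = y := by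
  rw [mulVec_sub, mulVec_mulVec, mulVec_mulVec, hcuu, one_mulVec, ← transpose_transpose L,
    ← transpose_mul, hclu, transpose_zero, zero_mulVec, sub_zero]

theorem exists_transpose_submatrix_mulVec_eq_iff [Fintype ι] [Fintype κ] [DecidableEq ι]
    [DecidableEq n] (horth : L * Lᵀ + U * Uᵀ = 1) (hcuu : Uᵀ * U = 1) (hclu : Lᵀ * U = 0)
    {e : κ → ι} (he : e.Injective) (y : n → ℝ) :
    (∃ μ, (U.submatrix e id)ᵀ *ᵥ μ = y) ↔ ∃ ω, ∀ i ∉ Set.range e, (U *ᵥ y) i = (L *ᵥ ω) i := by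
  constructor
  · rintro ⟨μ, rfl⟩
    exact ⟨_, fun _ hi => mulVec_transpose_submatrix_mulVec_apply_of_notMem_range L U horth e μ hi⟩
  · rintro ⟨ω, hω⟩
    refine ⟨(U *ᵥ y - L *ᵥ ω) ∘ e, ?_⟩
    have hc : ∀ i ∉ Set.range e, (U *ᵥ y - L *ᵥ ω) i = 0 := fun i hi => sub_eq_zero.2 (hω i hi)
    rw [← transpose_mulVec_eq_submatrix_mulVec_comp U he hc,
      transpose_mulVec_sub_mulVec L U hcuu hclu]

end Matrix

theorem ncd_zero_residual_iff_general
    (Nl Nu n k : ℕ) (hk : k ≤ n)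
    (Aul : Matrix (Fin Nu) (Fin Nl) ℝ)
    (l : Fin n → Fin Nl → ℝ) (u : Fin n → Fin Nu → ℝ)
    -- the stacked vectors [l_i; u_i] are orthonormal
    (horth : ∀ i j : Fin n,
      (∑ p, l i p * l j p) + (∑ p, u i p * u j p) = if i = j then 1 else 0)
    -- completeness: Σ_i v_i v_iᵀ = I (blockwise)
    (hcuu : ∀ p q : Fin Nu, (∑ i, u i p * u i q) = if p = q then 1 else 0)
    (hclu : ∀ (p : Fin Nl) (q : Fin Nu), (∑ i, l i p * u i q) = 0)
    -- Pinv i is the Moore–Penrose pseudoinverse of (σ_i·I - A_uu)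
    (Pinv : Fin n → Matrix (Fin Nu) (Fin Nu) ℝ)
    -- unlabeled part of each eigenvector: u_i = (σ_i·I - A_uu)†·A_ul·l_i
    (hu : ∀ i, u i = (Pinv i * Aul).mulVec (l i))
    (y : Fin Nu → ℝ) :
    (⨅ μ : Fin k → ℝ, ∑ x, (y x - ∑ j : Fin k, u (Fin.castLE hk j) x * μ j) ^ 2) = 0
      ↔ ∃ ω : Fin Nl → ℝ, ∀ i : Fin n, k ≤ (i : ℕ) →
          (Matrix.vecMul y (Pinv i * Aul)) ⬝ᵥ l i = ω ⬝ᵥ l i := by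
  have horth_mat : of l * (of l)ᵀ + of u * (of u)ᵀ = 1 := by ext i j; exact horth i j
  have hcuu_mat : (of u)ᵀ * of u = 1 := by ext p q; exact hcuu p q
  have hclu_mat : (of l)ᵀ * of u = 0 := by ext p q; exact hclu p q
  have hcoeff (i : Fin n) : vecMul y (Pinv i * Aul) ⬝ᵥ l i = (of u *ᵥ y) i := by
    rw [← dotProduct_mulVec, ← hu, dotProduct_comm]; rfl
  have htop (i : Fin n) : k ≤ (i : ℕ) ↔ i ∉ Set.range (Fin.castLE hk) := by simp
  refine ((((of u).submatrix (Fin.castLE hk) id)ᵀ).iInf_sum_sq_sub_mulVec_eq_zero_iff y).trans ?_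
  rw [exists_transpose_submatrix_mulVec_eq_iff (of l) (of u) horth_mat hcuu_mat hclu_mat
    (Fin.castLE_injective hk)]
  refine exists_congr fun ω => forall_congr' fun i => ?_
  rw [htop, hcoeff, dotProduct_comm]
  rfl

/-- In the NCD setting, let Ȧ have eigenpairs (σ_i, v_i) with
    v_i = [l_i; u_i] and u_i = (σ_i·I - A_uu)†·A_ul·l_i, where the stacked eigenvectors
    form an orthonormal basis (expressed below by the orthonormality and completeness
    relations).  Then the residual R(U*, y) = min_μ ‖y - U*μ‖₂² of the top-k unlabeled
    representation U* vanishes if and only if there exists ω ∈ R^{N_l} such that for all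
    i ≥ k, ⟨yᵀ(σ_i·I - A_uu)†·A_ul, l_i⟩ = ⟨ω, l_i⟩. -/
theorem ncd_zero_residual_iff
    (Nl Nu n k : ℕ) (hk : k ≤ n)
    (Aul : Matrix (Fin Nu) (Fin Nl) ℝ) (Auu : Matrix (Fin Nu) (Fin Nu) ℝ)
    (sigma : Fin n → ℝ) (l : Fin n → Fin Nl → ℝ) (u : Fin n → Fin Nu → ℝ)
    -- the stacked vectors [l_i; u_i] are orthonormal
    (horth : ∀ i j : Fin n,
      (∑ p, l i p * l j p) + (∑ p, u i p * u j p) = if i = j then 1 else 0)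
    -- completeness: Σ_i v_i v_iᵀ = I (blockwise)
    (hcll : ∀ p q : Fin Nl, (∑ i, l i p * l i q) = if p = q then 1 else 0)
    (hcuu : ∀ p q : Fin Nu, (∑ i, u i p * u i q) = if p = q then 1 else 0)
    (hclu : ∀ (p : Fin Nl) (q : Fin Nu), (∑ i, l i p * u i q) = 0)
    -- Pinv i is the Moore–Penrose pseudoinverse of (σ_i·I - A_uu)
    (Pinv : Fin n → Matrix (Fin Nu) (Fin Nu) ℝ)
    (hp1 : ∀ i, (sigma i • 1 - Auu) * Pinv i * (sigma i • 1 - Auu) = sigma i • 1 - Auu)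
    (hp2 : ∀ i, Pinv i * (sigma i • 1 - Auu) * Pinv i = Pinv i)
    (hp3 : ∀ i, ((sigma i • 1 - Auu) * Pinv i)ᵀ = (sigma i • 1 - Auu) * Pinv i)
    (hp4 : ∀ i, (Pinv i * (sigma i • 1 - Auu))ᵀ = Pinv i * (sigma i • 1 - Auu))
    -- unlabeled part of each eigenvector: u_i = (σ_i·I - A_uu)†·A_ul·l_i
    (hu : ∀ i, u i = (Pinv i * Aul).mulVec (l i))
    (y : Fin Nu → ℝ) :
    (⨅ μ : Fin k → ℝ, ∑ x, (y x - ∑ j : Fin k, u (Fin.castLE hk j) x * μ j) ^ 2) = 0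
      ↔ ∃ ω : Fin Nl → ℝ, ∀ i : Fin n, k ≤ (i : ℕ) →
          (Matrix.vecMul y (Pinv i * Aul)) ⬝ᵥ l i = ω ⬝ᵥ l i :=
  ncd_zero_residual_iff_general Nl Nu n k hk Aul l u horth hcuu hclu Pinv hu y
end

section
/- Let Ω be an n×n diagonal matrix with positive diagonal entries ω_1, ..., ω_n. Then for every nonzero vector l ∈ R^n, 1 ≥ (lᵀ Ω l)/(||Ω l||₂ ||l||₂) ≥ min over pairs (i,j) of 2√(ω_i ω_j)/(ω_i + ω_j). Moreover this ratio equals 1 for all l if and only if all ω_i are equal. -/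
/-!
The upper bound is Cauchy–Schwarz for the vectors `Ω l` and `l`. For the lower bound, if
`m ≤ ω i ≤ M` then `(ω i - m)(M - ω i) ≥ 0`; weighting by `l i ^ 2` and summing gives
`‖Ω l‖² + m M ‖l‖² ≤ (m + M) lᵀΩl`, and AM–GM on the left-hand side yields the Kantorovich
inequality `4 m M ‖Ω l‖² ‖l‖² ≤ (m + M)² (lᵀΩl)²`. If all `ω i` are equal the two bounds
coincide at `1`; conversely, at `l = e_i + e_j` the ratio is `1` only if `ω i = ω j`.
-/

open Finset Real

variable {ι : Type*} [Fintype ι]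

noncomputable def diagCosine (ω l : ι → ℝ) : ℝ :=
  (∑ i, ω i * l i ^ 2) / (√(∑ i, (ω i * l i) ^ 2) * √(∑ i, l i ^ 2))

lemma sum_sq_pos_of_ne_zero {f : ι → ℝ} (hf : f ≠ 0) : 0 < ∑ i, f i ^ 2 := by
  obtain ⟨i, hi⟩ := Function.ne_iff.1 hf
  exact sum_pos' (fun j _ => sq_nonneg _) ⟨i, mem_univ i, sq_pos_of_ne_zero hi⟩

lemma sq_sum_mul_sq_le (ω l : ι → ℝ) :
    (∑ i, ω i * l i ^ 2) ^ 2 ≤ (∑ i, (ω i * l i) ^ 2) * ∑ i, l i ^ 2 := by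
  simpa only [mul_assoc, ← sq] using sum_mul_sq_le_sq_mul_sq univ (fun i => ω i * l i) l

lemma diagCosine_le_one (ω l : ι → ℝ) : diagCosine ω l ≤ 1 := by
  refine div_le_one_of_le₀ ?_ (by positivity)
  calc ∑ i, ω i * l i ^ 2
      ≤ |∑ i, ω i * l i ^ 2| := le_abs_self _
    _ = √((∑ i, ω i * l i ^ 2) ^ 2) := (sqrt_sq_eq_abs _).symm
    _ ≤ √((∑ i, (ω i * l i) ^ 2) * ∑ i, l i ^ 2) := sqrt_le_sqrt (sq_sum_mul_sq_le ω l)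
    _ = √(∑ i, (ω i * l i) ^ 2) * √(∑ i, l i ^ 2) := sqrt_mul (by positivity) _

lemma kantorovich_diag {ω : ι → ℝ} {m M : ℝ} (hmM : 0 ≤ m * M)
    (hbounds : ∀ i, m ≤ ω i ∧ ω i ≤ M) (l : ι → ℝ) :
    4 * m * M * ((∑ i, (ω i * l i) ^ 2) * ∑ i, l i ^ 2)
      ≤ (m + M) ^ 2 * (∑ i, ω i * l i ^ 2) ^ 2 := by
  set A := ∑ i, (ω i * l i) ^ 2
  set B := ∑ i, l i ^ 2
  set S := ∑ i, ω i * l i ^ 2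
  have hlinear : A + m * M * B ≤ (m + M) * S := by
    simp only [A, B, S, mul_sum, ← sum_add_distrib]
    refine sum_le_sum fun i _ => ?_
    have := mul_nonneg (mul_nonneg (sub_nonneg.2 (hbounds i).1) (sub_nonneg.2 (hbounds i).2))
      (sq_nonneg (l i))
    linear_combination this
  have hB : 0 ≤ B := by positivity
  nlinarith [mul_le_mul_of_nonneg_right hlinear hB, sq_nonneg ((m + M) * S - 2 * m * M * B), hmM]

lemma two_sqrt_mul_div_add_le_diagCosine {ω l : ι → ℝ} {m M : ℝ} (hm : 0 < m)
    (hbounds : ∀ i, m ≤ ω i ∧ ω i ≤ M) (hl : l ≠ 0) :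
    2 * √(m * M) / (m + M) ≤ diagCosine ω l := by
  have hω : ∀ i, 0 < ω i := fun i => hm.trans_le (hbounds i).1
  obtain ⟨k, -⟩ := Function.ne_iff.1 hl
  have hM : 0 < M := hm.trans_le ((hbounds k).1.trans (hbounds k).2)
  have hA : 0 < ∑ i, (ω i * l i) ^ 2 :=
    sum_sq_pos_of_ne_zero fun h => hl <| funext fun i =>
      (mul_eq_zero.1 (congrFun h i)).resolve_left (hω i).ne'
  have hB : 0 < ∑ i, l i ^ 2 := sum_sq_pos_of_ne_zero hl
  have hS : 0 ≤ ∑ i, ω i * l i ^ 2 := sum_nonneg fun i _ => mul_nonneg (hω i).le (sq_nonneg _)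
  rw [diagCosine, div_le_div_iff₀ (by positivity) (by positivity),
    ← pow_le_pow_iff_left₀ (by positivity) (by positivity) two_ne_zero]
  calc (2 * √(m * M) * (√(∑ i, (ω i * l i) ^ 2) * √(∑ i, l i ^ 2))) ^ 2
      = 4 * m * M * ((∑ i, (ω i * l i) ^ 2) * ∑ i, l i ^ 2) := by
        rw [mul_pow, mul_pow, mul_pow, sq_sqrt (mul_pos hm hM).le, sq_sqrt hA.le, sq_sqrt hB.le]
        ring
    _ ≤ (m + M) ^ 2 * (∑ i, ω i * l i ^ 2) ^ 2 := kantorovich_diag (mul_pos hm hM).le hbounds l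
    _ = ((∑ i, ω i * l i ^ 2) * (m + M)) ^ 2 := by ring

lemma iInf_iInf_le_diagCosine {ω l : ι → ℝ} (hω : ∀ i, 0 < ω i) (hl : l ≠ 0) :
    ⨅ i, ⨅ j, 2 * √(ω i * ω j) / (ω i + ω j) ≤ diagCosine ω l := by
  obtain ⟨k, -⟩ := Function.ne_iff.1 hl
  have : Nonempty ι := ⟨k⟩
  obtain ⟨imin, himin⟩ := Finite.exists_min ω
  obtain ⟨imax, himax⟩ := Finite.exists_max ω
  calc ⨅ i, ⨅ j, 2 * √(ω i * ω j) / (ω i + ω j)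
      ≤ ⨅ j, 2 * √(ω imin * ω j) / (ω imin + ω j) := ciInf_le (Finite.bddBelow_range _) imin
    _ ≤ 2 * √(ω imin * ω imax) / (ω imin + ω imax) := ciInf_le (Finite.bddBelow_range _) imax
    _ ≤ diagCosine ω l :=
        two_sqrt_mul_div_add_le_diagCosine (hω imin) (fun i => ⟨himin i, himax i⟩) hl

lemma diagCosine_eq_one_of_forall_eq {ω l : ι → ℝ} (hω : ∀ i, 0 < ω i)
    (hconst : ∀ i j, ω i = ω j) (hl : l ≠ 0) : diagCosine ω l = 1 := by
  obtain ⟨k, -⟩ := Function.ne_iff.1 hl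
  have hbounds : ∀ i, ω k ≤ ω i ∧ ω i ≤ ω k := fun i => ⟨(hconst k i).le, (hconst i k).le⟩
  refine le_antisymm (diagCosine_le_one ω l) ?_
  have hlower := two_sqrt_mul_div_add_le_diagCosine (hω k) hbounds hl
  rwa [sqrt_mul_self (hω k).le, ← two_mul, mul_div_mul_left _ _ two_ne_zero,
    div_self (hω k).ne'] at hlower

lemma diagCosine_single_add_single [DecidableEq ι] (ω : ι → ℝ) {i j : ι} (hij : i ≠ j) :
    diagCosine ω (Pi.single i 1 + Pi.single j 1) =
      (ω i + ω j) / (√(ω i ^ 2 + ω j ^ 2) * √2) := by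
  have hsum (f : ι → ℝ) :
      ∑ k, f k * (Pi.single i 1 + Pi.single j 1 : ι → ℝ) k ^ 2 = f i + f j := by
    simp [Pi.single_apply, add_sq, mul_add, sum_add_distrib, hij.symm]
  have hB := hsum 1
  simp only [Pi.one_apply, one_mul] at hB
  simp only [diagCosine, mul_pow]
  rw [hsum, hsum (ω · ^ 2), hB, one_add_one_eq_two]

lemma eq_of_diagCosine_single_add_single_eq_one [DecidableEq ι] {ω : ι → ℝ} (hω : ∀ i, 0 < ω i)
    {i j : ι} (hij : i ≠ j) (h : diagCosine ω (Pi.single i 1 + Pi.single j 1) = 1) :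
    ω i = ω j := by
  have hi := hω i
  have hj := hω j
  rw [diagCosine_single_add_single ω hij, div_eq_one_iff_eq (by positivity)] at h
  have hsq : (ω i + ω j) ^ 2 = (ω i ^ 2 + ω j ^ 2) * 2 := by
    rw [h, mul_pow, sq_sqrt (by positivity), sq_sqrt zero_le_two]
  nlinarith

theorem diag_cosine_bound_general (n : ℕ) (ω : Fin n → ℝ) (hω : ∀ i, 0 < ω i) :
    let ratio : (Fin n → ℝ) → ℝ := fun l =>
      (∑ i, ω i * l i ^ 2) /
        (Real.sqrt (∑ i, (ω i * l i) ^ 2) * Real.sqrt (∑ i, l i ^ 2))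
    (∀ l : Fin n → ℝ, l ≠ 0 →
        ratio l ≤ 1 ∧
        (⨅ i : Fin n, ⨅ j : Fin n, 2 * Real.sqrt (ω i * ω j) / (ω i + ω j)) ≤ ratio l)
    ∧ ((∀ l : Fin n → ℝ, l ≠ 0 → ratio l = 1) ↔ ∀ i j, ω i = ω j) := by
  refine ⟨fun l hl => ⟨diagCosine_le_one ω l, iInf_iInf_le_diagCosine hω hl⟩,
    fun h i j => ?_, fun hconst l hl => diagCosine_eq_one_of_forall_eq hω hconst hl⟩
  rcases eq_or_ne i j with rfl | hij
  · rfl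
  · refine eq_of_diagCosine_single_add_single_eq_one hω hij (h _ fun h0 => ?_)
    simpa [hij] using congrFun h0 i

/-- For Ω = diag(ω_1,...,ω_n) with ω_i > 0 and any nonzero l ∈ R^n,
    1 ≥ (lᵀΩl)/(‖Ωl‖₂‖l‖₂) ≥ min_{i,j} 2√(ω_i ω_j)/(ω_i + ω_j); and the ratio equals 1
    for all nonzero l iff all the ω_i are equal. -/
theorem diag_cosine_bound (n : ℕ) (hn : 0 < n) (ω : Fin n → ℝ) (hω : ∀ i, 0 < ω i) :
    let ratio : (Fin n → ℝ) → ℝ := fun l =>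
      (∑ i, ω i * l i ^ 2) /
        (Real.sqrt (∑ i, (ω i * l i) ^ 2) * Real.sqrt (∑ i, l i ^ 2))
    (∀ l : Fin n → ℝ, l ≠ 0 →
        ratio l ≤ 1 ∧
        (⨅ i : Fin n, ⨅ j : Fin n, 2 * Real.sqrt (ω i * ω j) / (ω i + ω j)) ≤ ratio l)
    ∧ ((∀ l : Fin n → ℝ, l ≠ 0 → ratio l = 1) ↔ ∀ i j, ω i = ω j) :=
  diag_cosine_bound_general n ω hω
end

section
/- Let F ∈ R^{N×k} with rows f_x = √(w_x) f(x), where w_{xx'} ≥ 0 are symmetric edge weights, w_x = Σ_{x'} w_{xx'}, and Ȧ_{xx'} = w_{xx'}/√(w_x w_{x'}). Then ||Ȧ - FFᵀ||_F² = Σ_{x,x'} (w_{xx'}/√(w_x w_{x'}))² + Σ_{x,x'} (-2 w_{xx'} f(x)ᵀf(x') + w_x w_{x'} (f(x)ᵀf(x'))²); i.e., the low-rank matrix factorization loss equals a constant plus the spectral contrastive loss with positive-pair weight w_{xx'} and negative-pair weight w_x w_{x'}. -/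
open Finset Real

theorem sq_div_sqrt_mul_sub_sqrt_mul_sqrt_mul {d d' : ℝ} (hd : 0 < d) (hd' : 0 < d') (a s : ℝ) :
    (a / √(d * d') - √d * √d' * s) ^ 2 = (a / √(d * d')) ^ 2 + (-2 * a * s + d * d' * s ^ 2) := by
  have hroot : √(d * d') = √d * √d' := sqrt_mul hd.le d'
  have hcross : a / √(d * d') * (√d * √d' * s) = a * s := by
    rw [hroot]
    field_simp
  have hsq : (√d * √d' * s) ^ 2 = d * d' * s ^ 2 := by
    rw [mul_pow, mul_pow, sq_sqrt hd.le, sq_sqrt hd'.le]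
  calc (a / √(d * d') - √d * √d' * s) ^ 2
      = (a / √(d * d')) ^ 2 - 2 * (a / √(d * d') * (√d * √d' * s)) + (√d * √d' * s) ^ 2 := by
        ring
    _ = (a / √(d * d')) ^ 2 + (-2 * a * s + d * d' * s ^ 2) := by
        rw [hcross, hsq]
        ring

theorem spectral_contrastive_loss_eq_general (N k : ℕ)
    (w : Fin N → Fin N → ℝ)
    (hdeg : ∀ x, 0 < ∑ x', w x x')
    (f : Fin N → Fin k → ℝ) :
    let deg : Fin N → ℝ := fun x => ∑ x', w x x'
    (∑ x, ∑ x', (w x x' / Real.sqrt (deg x * deg x')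
        - Real.sqrt (deg x) * Real.sqrt (deg x') * (∑ j, f x j * f x' j)) ^ 2)
      = (∑ x, ∑ x', (w x x' / Real.sqrt (deg x * deg x')) ^ 2)
        + ∑ x, ∑ x', (-2 * w x x' * (∑ j, f x j * f x' j)
            + deg x * deg x' * (∑ j, f x j * f x' j) ^ 2) := by
  intro deg
  rw [← sum_add_distrib]
  refine sum_congr rfl fun x _ => ?_
  rw [← sum_add_distrib]
  exact sum_congr rfl fun x' _ => sq_div_sqrt_mul_sub_sqrt_mul_sqrt_mul (hdeg x) (hdeg x') _ _

/-- With Ȧ_{xx'} = w_{xx'}/√(w_x w_{x'}) and F having rows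
    √(w_x)·f(x)ᵀ, the matrix-factorization loss ‖Ȧ - FFᵀ‖_F² equals the constant
    Σ (w_{xx'}/√(w_x w_{x'}))² plus the spectral contrastive loss
    Σ (-2 w_{xx'} f(x)ᵀf(x') + w_x w_{x'} (f(x)ᵀf(x'))²). -/
theorem spectral_contrastive_loss_eq (N k : ℕ)
    (w : Fin N → Fin N → ℝ)
    (hsym : ∀ x x', w x x' = w x' x)
    (hnn : ∀ x x', 0 ≤ w x x')
    (hdeg : ∀ x, 0 < ∑ x', w x x')
    (f : Fin N → Fin k → ℝ) :
    let deg : Fin N → ℝ := fun x => ∑ x', w x x'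
    (∑ x, ∑ x', (w x x' / Real.sqrt (deg x * deg x')
        - Real.sqrt (deg x) * Real.sqrt (deg x') * (∑ j, f x j * f x' j)) ^ 2)
      = (∑ x, ∑ x', (w x x' / Real.sqrt (deg x * deg x')) ^ 2)
        + ∑ x, ∑ x', (-2 * w x x' * (∑ j, f x j * f x' j)
            + deg x * deg x' * (∑ j, f x j * f x' j) ^ 2) :=
  spectral_contrastive_loss_eq_general N k w hdeg f
end
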